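/- arXiv:1503.06923 — 4 statements merged into one kernel-verified Lean document; each statement's English description precedes it below -/
import Mathlib

section
/- Let β be the nondegenerate Hermitian form β(u₁,u₂) = -x₁x₂^q + y₁z₂^q + z₁y₂^q on V = F_{q^2}^3. If u₁, u₂ are nonzero isotropic vectors spanning distinct 1-dimensional subspaces, then for each μ ∈ F_{q^2}^* there are exactly q+1 vectors u₀ ∈ V satisfying β(u₀,u₀) = -μ^{q+1}, β(u₀,u₁) = 0, β(u₀,u₂) = 0, and any two such vectors differ by a scalar multiple. -/
/-- The Hermitian form `β(u,v) = -x₁x₂^q + y₁z₂^q + z₁y₂^q` on `F_{q²}³`. -/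
def herm {K : Type*} [Field K] (q : ℕ) (u v : Fin 3 → K) : K :=
  -(u 0 * v 0 ^ q) + u 1 * v 2 ^ q + u 2 * v 1 ^ q

/-!
Write `herm q u v = u ⬝ᵥ hermDual q v`, where `hermDual q` is a `q`-semilinear involution of `K³`
commuting with the cross product. Then the vectors orthogonal to `u₁` and `u₂` form the line
through `w = hermDual q u₁ ⨯₃ hermDual q u₂`, and the Binet–Cauchy identity gives
`herm q w w = -β ^ (q + 1)` with `β = herm q u₁ u₂`. Here `β ≠ 0`, for otherwise `u₁` and
`u₂` would both lie on the line through `w`. So `c • w` is a solution iff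
`(c * β) ^ (q + 1) = μ ^ (q + 1)`, which has `q + 1` solutions since `q + 1` divides `q² - 1`,
the order of the cyclic group `Kˣ`.
-/

open Finset Matrix Polynomial

theorem IsPrimitiveRoot.card_nthRootsFinset_pow {R : Type*} [CommRing R] [IsDomain R] {ζ : R}
    {n : ℕ} (h : IsPrimitiveRoot ζ n) {a : R} (ha : a ≠ 0) : #(nthRootsFinset n (a ^ n)) = n := by
  classical
  rw [nthRootsFinset_def, Multiset.toFinset_card_of_nodup (h.nthRoots_nodup (pow_ne_zero n ha)),
    h.card_nthRoots, if_pos ⟨a, rfl⟩]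

theorem LinearIndependent.pair_of_span_singleton_ne {K V : Type*} [Field K] [AddCommGroup V]
    [Module K V] {x y : V} (hx : x ≠ 0) (hy : y ≠ 0)
    (hxy : Submodule.span K {x} ≠ Submodule.span K {y}) : LinearIndependent K ![x, y] := by
  refine (LinearIndependent.pair_iff' hx).2 fun a hax => hxy ?_
  have ha : a ≠ 0 := by
    rintro rfl
    exact hy (by rw [← hax, zero_smul])
  rw [← hax, Submodule.span_singleton_smul_eq (IsUnit.mk0 a ha)]

theorem exists_eq_smul_cross_of_dotProduct_eq_zero {F : Type*} [Field F] {a b x : Fin 3 → F}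
    (hab : a ⨯₃ b ≠ 0) (ha : x ⬝ᵥ a = 0) (hb : x ⬝ᵥ b = 0) : ∃ c : F, x = c • a ⨯₃ b := by
  have hx : (a ⨯₃ b) ⨯₃ x = 0 := by
    rw [← cross_anticomm, cross_cross_eq_smul_sub_smul', hb, dotProduct_comm, ha, zero_smul,
      zero_smul, sub_zero, neg_zero]
  obtain ⟨c, hc⟩ : ∃ c : F, c • a ⨯₃ b = x := by
    simpa [LinearIndependent.pair_iff' hab] using crossProduct_ne_zero_iff_linearIndependent.not.1
      (not_not.2 hx)
  exact ⟨c, hc.symm⟩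

namespace FiniteField

variable {K : Type*} [Field K] [Fintype K]

theorem exists_isPrimitiveRoot_of_dvd_card_sub_one {n : ℕ} (hn : n ∣ Fintype.card K - 1) :
    ∃ ζ : K, IsPrimitiveRoot ζ n := by
  obtain ⟨g, hg⟩ := IsCyclic.exists_ofOrder_eq_natCard (α := Kˣ)
  rw [Nat.card_units, Nat.card_eq_fintype_card] at hg
  have hζ := IsPrimitiveRoot.orderOf (g ^ (orderOf g / n))
  rw [orderOf_pow_orderOf_div (orderOf_pos g).ne' (hg ▸ hn)] at hζ
  exact ⟨_, IsPrimitiveRoot.coe_units_iff.2 hζ⟩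

variable {q : ℕ}

theorem exists_ringHom_eq_pow_of_card_eq_sq (hK : Fintype.card K = q ^ 2) :
    ∃ σ : K →+* K, ∀ x, σ x = x ^ q := by
  obtain ⟨p, hchar, n, hp, hcard⟩ := FiniteField.card' K
  have hq : q ∣ p ^ (n : ℕ) := hcard ▸ hK ▸ dvd_pow_self q two_ne_zero
  obtain ⟨m, -, rfl⟩ := (Nat.dvd_prime_pow hp).1 hq
  have := ExpChar.prime (R := K) hp
  exact ⟨iterateFrobenius K p m, fun x => iterateFrobenius_def ..⟩

theorem add_pow_of_card_eq_sq (hK : Fintype.card K = q ^ 2) (x y : K) :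
    (x + y) ^ q = x ^ q + y ^ q := by
  obtain ⟨σ, hσ⟩ := exists_ringHom_eq_pow_of_card_eq_sq hK
  simpa only [hσ] using map_add σ x y

theorem sub_pow_of_card_eq_sq (hK : Fintype.card K = q ^ 2) (x y : K) :
    (x - y) ^ q = x ^ q - y ^ q := by
  obtain ⟨σ, hσ⟩ := exists_ringHom_eq_pow_of_card_eq_sq hK
  simpa only [hσ] using map_sub σ x y

theorem neg_pow_of_card_eq_sq (hK : Fintype.card K = q ^ 2) (x : K) : (-x) ^ q = -x ^ q := by
  obtain ⟨σ, hσ⟩ := exists_ringHom_eq_pow_of_card_eq_sq hK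
  simpa only [hσ] using map_neg σ x

theorem pow_pow_of_card_eq_sq (hK : Fintype.card K = q ^ 2) (x : K) : (x ^ q) ^ q = x := by
  rw [← pow_mul, ← sq, ← hK, pow_card]

theorem exists_isPrimitiveRoot_of_card_eq_sq (hK : Fintype.card K = q ^ 2) :
    ∃ ζ : K, IsPrimitiveRoot ζ (q + 1) :=
  exists_isPrimitiveRoot_of_dvd_card_sub_one
    (hK ▸ Dvd.intro _ (by rw [← Nat.sq_sub_sq, one_pow]))

end FiniteField

section Herm

open FiniteField

variable {K : Type*} [Field K] {q : ℕ}

def hermDual (q : ℕ) (v : Fin 3 → K) : Fin 3 → K :=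
  ![-v 0 ^ q, v 2 ^ q, v 1 ^ q]

theorem herm_eq_dotProduct_hermDual (u v : Fin 3 → K) : herm q u v = u ⬝ᵥ hermDual q v := by
  simp only [herm, hermDual, vec3_dotProduct, Matrix.cons_val]
  ring

theorem hermDual_smul (c : K) (v : Fin 3 → K) : hermDual q (c • v) = c ^ q • hermDual q v := by
  ext i
  fin_cases i <;> simp [hermDual, mul_pow]

theorem herm_smul_left (c : K) (u v : Fin 3 → K) : herm q (c • u) v = c * herm q u v := by
  rw [herm_eq_dotProduct_hermDual, herm_eq_dotProduct_hermDual, smul_dotProduct, smul_eq_mul]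

theorem herm_smul_right (c : K) (u v : Fin 3 → K) : herm q u (c • v) = c ^ q * herm q u v := by
  rw [herm_eq_dotProduct_hermDual, herm_eq_dotProduct_hermDual, hermDual_smul, dotProduct_smul,
    smul_eq_mul]

def hermPerp (q : ℕ) (u v : Fin 3 → K) : Fin 3 → K :=
  hermDual q u ⨯₃ hermDual q v

theorem herm_hermPerp_left (u v : Fin 3 → K) : herm q (hermPerp q u v) u = 0 := by
  rw [herm_eq_dotProduct_hermDual, hermPerp, dotProduct_comm, dot_self_cross]

theorem herm_hermPerp_right (u v : Fin 3 → K) : herm q (hermPerp q u v) v = 0 := by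
  rw [herm_eq_dotProduct_hermDual, hermPerp, dotProduct_comm, dot_cross_self]

variable [Fintype K]

theorem hermDual_add (hK : Fintype.card K = q ^ 2) (u v : Fin 3 → K) :
    hermDual q (u + v) = hermDual q u + hermDual q v := by
  ext i
  fin_cases i <;> simp [hermDual, add_pow_of_card_eq_sq hK]
  ring

theorem hermDual_zero (hK : Fintype.card K = q ^ 2) : hermDual q (0 : Fin 3 → K) = 0 := by
  simpa using hermDual_add hK 0 0

theorem hermDual_hermDual (hK : Fintype.card K = q ^ 2) (v : Fin 3 → K) :
    hermDual q (hermDual q v) = v := by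
  ext i
  fin_cases i <;> simp [hermDual, neg_pow_of_card_eq_sq hK, pow_pow_of_card_eq_sq hK]

theorem hermDual_cross (hK : Fintype.card K = q ^ 2) (u v : Fin 3 → K) :
    hermDual q (u ⨯₃ v) = hermDual q u ⨯₃ hermDual q v := by
  ext i
  fin_cases i <;> simp [hermDual, cross_apply, sub_pow_of_card_eq_sq hK, mul_pow] <;> ring

theorem herm_pow (hK : Fintype.card K = q ^ 2) (u v : Fin 3 → K) :
    herm q u v ^ q = herm q v u := by
  simp only [herm, add_pow_of_card_eq_sq hK, neg_pow_of_card_eq_sq hK, mul_pow,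
    pow_pow_of_card_eq_sq hK]
  ring

theorem linearIndependent_hermDual (hK : Fintype.card K = q ^ 2) {u v : Fin 3 → K}
    (h : LinearIndependent K ![u, v]) : LinearIndependent K ![hermDual q u, hermDual q v] := by
  refine LinearIndependent.pair_iff.2 fun s t hst => ?_
  have := congrArg (hermDual q) hst
  rw [hermDual_add hK, hermDual_smul, hermDual_smul, hermDual_hermDual hK, hermDual_hermDual hK,
    hermDual_zero hK] at this
  obtain ⟨hs, ht⟩ := LinearIndependent.pair_iff.1 h _ _ this
  exact ⟨eq_zero_of_pow_eq_zero hs, eq_zero_of_pow_eq_zero ht⟩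

theorem hermPerp_ne_zero (hK : Fintype.card K = q ^ 2) {u v : Fin 3 → K}
    (h : LinearIndependent K ![u, v]) : hermPerp q u v ≠ 0 :=
  crossProduct_ne_zero_iff_linearIndependent.2 (linearIndependent_hermDual hK h)

theorem herm_hermPerp_self (hK : Fintype.card K = q ^ 2) (u v : Fin 3 → K) :
    herm q (hermPerp q u v) (hermPerp q u v) =
      herm q u u * herm q v v - herm q u v * herm q v u := by
  rw [herm_eq_dotProduct_hermDual, hermPerp, hermDual_cross hK, hermDual_hermDual hK,
    hermDual_hermDual hK, cross_dot_cross]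
  simp only [herm_eq_dotProduct_hermDual, dotProduct_comm (hermDual q _)]
  ring

theorem exists_eq_smul_hermPerp (hK : Fintype.card K = q ^ 2) {u v x : Fin 3 → K}
    (h : LinearIndependent K ![u, v]) (hu : herm q x u = 0) (hv : herm q x v = 0) :
    ∃ c : K, x = c • hermPerp q u v := by
  rw [herm_eq_dotProduct_hermDual] at hu hv
  exact exists_eq_smul_cross_of_dotProduct_eq_zero (hermPerp_ne_zero hK h) hu hv

theorem herm_ne_zero_of_isotropic (hK : Fintype.card K = q ^ 2) {u v : Fin 3 → K}
    (h : LinearIndependent K ![u, v]) (hu : herm q u u = 0) (hv : herm q v v = 0) :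
    herm q u v ≠ 0 := by
  intro huv
  have hvu : herm q v u = 0 := eq_zero_of_pow_eq_zero (by rw [herm_pow hK, huv])
  obtain ⟨a, ha⟩ := exists_eq_smul_hermPerp hK h hu huv
  obtain ⟨b, hb⟩ := exists_eq_smul_hermPerp hK h hvu hv
  generalize hermPerp q u v = w at ha hb
  obtain ⟨hb0, ha0⟩ := LinearIndependent.pair_iff.1 h b (-a) (by
    rw [ha, hb, smul_smul, smul_smul, neg_mul, mul_comm, neg_smul, add_neg_cancel])
  exact h.ne_zero 0 (by simp [ha, neg_eq_zero.1 ha0])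

theorem herm_self_eq_neg_pow_and_orthogonal_iff
    (hK : Fintype.card K = q ^ 2) {u v : Fin 3 → K} (h : LinearIndependent K ![u, v])
    (hu : herm q u u = 0) (hv : herm q v v = 0) (μ : K) (x : Fin 3 → K) :
    (herm q x x = -(μ ^ (q + 1)) ∧ herm q x u = 0 ∧ herm q x v = 0) ↔
      ∃ c : K, c ^ (q + 1) = μ ^ (q + 1) ∧ x = (c / herm q u v) • hermPerp q u v := by
  have hβ := herm_ne_zero_of_isotropic hK h hu hv
  have hself : ∀ d : K, herm q (d • hermPerp q u v) (d • hermPerp q u v) =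
      -((d * herm q u v) ^ (q + 1)) := fun d => by
    rw [herm_smul_left, herm_smul_right, herm_hermPerp_self hK, hu, hv, ← herm_pow hK u v]
    ring
  constructor
  · rintro ⟨hxx, hxu, hxv⟩
    obtain ⟨d, rfl⟩ := exists_eq_smul_hermPerp hK h hxu hxv
    exact ⟨d * herm q u v, neg_inj.1 ((hself d).symm.trans hxx),
      by rw [mul_div_cancel_right₀ _ hβ]⟩
  · rintro ⟨c, hc, rfl⟩
    refine ⟨?_, by rw [herm_smul_left, herm_hermPerp_left, mul_zero],
      by rw [herm_smul_left, herm_hermPerp_right, mul_zero]⟩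
    rw [hself, div_mul_cancel₀ _ hβ, hc]

end Herm

theorem perp_solutions_general (q : ℕ) (K : Type) [Field K] [Fintype K] [DecidableEq K]
    (hcard : Fintype.card K = q ^ 2)
    (u₁ u₂ : Fin 3 → K) (h1 : u₁ ≠ 0) (h2 : u₂ ≠ 0)
    (hiso1 : herm q u₁ u₁ = 0) (hiso2 : herm q u₂ u₂ = 0)
    (hdist : Submodule.span K {u₁} ≠ Submodule.span K {u₂})
    (μ : K) (hμ : μ ≠ 0) :
    (Finset.univ.filter (fun u₀ : Fin 3 → K =>
        herm q u₀ u₀ = -(μ ^ (q + 1)) ∧ herm q u₀ u₁ = 0 ∧ herm q u₀ u₂ = 0)).card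
      = q + 1
    ∧ ∀ u₀ w₀ : Fin 3 → K,
        herm q u₀ u₀ = -(μ ^ (q + 1)) → herm q u₀ u₁ = 0 → herm q u₀ u₂ = 0 →
        herm q w₀ w₀ = -(μ ^ (q + 1)) → herm q w₀ u₁ = 0 → herm q w₀ u₂ = 0 →
        ∃ c : K, w₀ = c • u₀ := by
  have hli := LinearIndependent.pair_of_span_singleton_ne h1 h2 hdist
  have hsol := herm_self_eq_neg_pow_and_orthogonal_iff hcard hli hiso1 hiso2 μ
  constructor
  · have hinj : Function.Injective fun c : K => (c / herm q u₁ u₂) • hermPerp q u₁ u₂ :=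
      (smul_left_injective K (hermPerp_ne_zero hcard hli)).comp
        fun _ _ => (div_left_inj' (herm_ne_zero_of_isotropic hcard hli hiso1 hiso2)).1
    have himage : univ.filter (fun u₀ : Fin 3 → K =>
        herm q u₀ u₀ = -(μ ^ (q + 1)) ∧ herm q u₀ u₁ = 0 ∧ herm q u₀ u₂ = 0) =
        (nthRootsFinset (q + 1) (μ ^ (q + 1))).image
          fun c => (c / herm q u₁ u₂) • hermPerp q u₁ u₂ := by
      ext x
      simp [hsol, mem_nthRootsFinset, eq_comm]
    obtain ⟨ζ, hζ⟩ := FiniteField.exists_isPrimitiveRoot_of_card_eq_sq hcard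
    rw [himage, card_image_of_injective _ hinj, hζ.card_nthRootsFinset_pow hμ]
  · intro x y hxx hxu hxv hyy hyu hyv
    obtain ⟨a, ha, rfl⟩ := (hsol x).1 ⟨hxx, hxu, hxv⟩
    obtain ⟨b, -, rfl⟩ := (hsol y).1 ⟨hyy, hyu, hyv⟩
    have ha0 : a ≠ 0 := by
      rintro rfl
      exact hμ (eq_zero_of_pow_eq_zero (ha.symm.trans (zero_pow q.succ_ne_zero)))
    exact ⟨b / a, by rw [smul_smul, div_mul_div_cancel₀ ha0]⟩

theorem perp_solutions
    (p e q : ℕ) (hp : p.Prime) (he : 0 < e) (hq : q = p ^ e) (hq2 : 2 < q)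
    (K : Type) [Field K] [Fintype K] [DecidableEq K]
    (hcard : Fintype.card K = q ^ 2)
    (u₁ u₂ : Fin 3 → K) (h1 : u₁ ≠ 0) (h2 : u₂ ≠ 0)
    (hiso1 : herm q u₁ u₁ = 0) (hiso2 : herm q u₂ u₂ = 0)
    (hdist : Submodule.span K {u₁} ≠ Submodule.span K {u₂})
    (μ : K) (hμ : μ ≠ 0) :
    (Finset.univ.filter (fun u₀ : Fin 3 → K =>
        herm q u₀ u₀ = -(μ ^ (q + 1)) ∧ herm q u₀ u₁ = 0 ∧ herm q u₀ u₂ = 0)).card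
      = q + 1
    ∧ ∀ u₀ w₀ : Fin 3 → K,
        herm q u₀ u₀ = -(μ ^ (q + 1)) → herm q u₀ u₁ = 0 → herm q u₀ u₂ = 0 →
        herm q w₀ w₀ = -(μ ^ (q + 1)) → herm q w₀ u₁ = 0 → herm q w₀ u₂ = 0 →
        ∃ c : K, w₀ = c • u₀ :=
  perp_solutions_general q K hcard u₁ u₂ h1 h2 hiso1 hiso2 hdist μ hμ
end

section
/- The set X = {⟨x,y,z⟩ : x^{q+1} = yz^q + zy^q, (x,y,z) ≠ 0} of 1-dimensional subspaces of F_{q^2}^3 spanned by nonzero isotropic vectors of the Hermitian form β has exactly q^3 + 1 elements. -/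
open Polynomial

theorem ncard_setOf_pow_eq_mul_le {K : Type*} [CommRing K] [IsDomain K] {n : ℕ} (hn : 1 < n) (c : K) :
    {y : K | y ^ n = c * y}.ncard ≤ n := by
  set P : K[X] := X ^ n - C c * X
  have hdeg : P.natDegree = n := by
    have hlt : (C c * X).natDegree < (X ^ n : K[X]).natDegree := by
      rw [natDegree_X_pow]
      exact (natDegree_C_mul_le c X).trans_lt (by rwa [natDegree_X])
    rw [natDegree_sub_eq_left_of_natDegree_lt hlt, natDegree_X_pow]
  have hP : P ≠ 0 := ne_zero_of_natDegree_gt (hdeg ▸ hn)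
  have hsub : {y : K | y ^ n = c * y} ⊆ P.rootSet K := fun y hy => by
    simp_all [mem_rootSet, P]
  calc {y : K | y ^ n = c * y}.ncard ≤ (P.rootSet K).ncard :=
        Set.ncard_le_ncard hsub (P.rootSet_finite K)
    _ ≤ n := hdeg ▸ ncard_rootSet_le P K

theorem one_lt_of_card_eq_sq {α : Type*} [Fintype α] [Nontrivial α] {q : ℕ}
    (hα : Fintype.card α = q ^ 2) : 1 < q :=
  (Nat.one_lt_pow_iff two_ne_zero).mp (hα ▸ Fintype.one_lt_card)

theorem pow_pow_eq_self_of_card_eq_sq {K : Type*} [Field K] [Fintype K] {q : ℕ}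
    (hK : Fintype.card K = q ^ 2) (a : K) : (a ^ q) ^ q = a := by
  rw [← pow_mul, ← sq, ← hK, FiniteField.pow_card]

section RelTrace

variable (K : Type*) [Field K] (p e : ℕ) [ExpChar K p]

def relTrace : K →+ K :=
  AddMonoidHom.id K + (iterateFrobenius K p e : K →+ K)

variable {K p e}

theorem relTrace_apply (y : K) : relTrace K p e y = y + y ^ p ^ e := rfl

variable [Fintype K] (hK : Fintype.card K = (p ^ e) ^ 2)
include hK

theorem relTrace_pow_eq_self (y : K) : relTrace K p e y ^ p ^ e = relTrace K p e y := by
  rw [relTrace_apply, ← iterateFrobenius_def, map_add, iterateFrobenius_def,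
    iterateFrobenius_def, pow_pow_eq_self_of_card_eq_sq hK, add_comm]

theorem ncard_ker_relTrace_le : ((relTrace K p e).ker : Set K).ncard ≤ p ^ e := by
  refine le_trans (Set.ncard_le_ncard (fun y hy => ?_)) <|
    ncard_setOf_pow_eq_mul_le (one_lt_of_card_eq_sq hK) (-1)
  simp only [SetLike.mem_coe, AddMonoidHom.mem_ker, relTrace_apply] at hy
  simp only [Set.mem_ofPred_eq]
  linear_combination hy

theorem ncard_range_relTrace_le : ((relTrace K p e).range : Set K).ncard ≤ p ^ e := by
  refine le_trans (Set.ncard_le_ncard ?_) <|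
    ncard_setOf_pow_eq_mul_le (one_lt_of_card_eq_sq hK) (1 : K)
  rintro _ ⟨y, rfl⟩
  simpa using relTrace_pow_eq_self hK y

theorem card_ker_relTrace_mul_card_range :
    Nat.card (relTrace K p e).ker * Nat.card (relTrace K p e).range = (p ^ e) ^ 2 := by
  rw [← AddSubgroup.index_ker, AddSubgroup.card_mul_index, Nat.card_eq_fintype_card, hK]

theorem card_ker_relTrace : Nat.card (relTrace K p e).ker = p ^ e := by
  have hk := ncard_ker_relTrace_le hK
  have hr := ncard_range_relTrace_le hK
  have := card_ker_relTrace_mul_card_range hK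
  rw [← Nat.card_coe_set_eq, SetLike.coe_sort_coe] at hk hr
  nlinarith

theorem card_range_relTrace : Nat.card (relTrace K p e).range = p ^ e := by
  have hk := card_ker_relTrace hK
  have := card_ker_relTrace_mul_card_range hK
  rw [hk, sq] at this
  exact Nat.eq_of_mul_eq_mul_left (zero_lt_one.trans (one_lt_of_card_eq_sq hK)) this

theorem coe_range_relTrace : ((relTrace K p e).range : Set K) = {c | c ^ p ^ e = c} := by
  have hsub : ((relTrace K p e).range : Set K) ⊆ {c | c ^ p ^ e = c} := by
    rintro _ ⟨y, rfl⟩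
    exact relTrace_pow_eq_self hK y
  refine Set.eq_of_subset_of_ncard_le hsub ?_ (Set.toFinite _)
  calc {c : K | c ^ p ^ e = c}.ncard ≤ p ^ e := by
        simpa using ncard_setOf_pow_eq_mul_le (one_lt_of_card_eq_sq hK) (1 : K)
    _ = ((relTrace K p e).range : Set K).ncard := by
        rw [← Nat.card_coe_set_eq, SetLike.coe_sort_coe, card_range_relTrace hK]

open Finset in
theorem card_relTrace_fiber [DecidableEq K] {c : K} (hc : c ^ p ^ e = c) :
    #{y | relTrace K p e y = c} = p ^ e := by
  have hmem : c ∈ Set.range (relTrace K p e) := by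
    rw [← AddMonoidHom.coe_range, coe_range_relTrace hK]; exact hc
  rw [AddMonoidHom.card_fiber_eq_of_mem_range _ hmem ⟨0, map_zero _⟩, ← card_ker_relTrace hK,
    Nat.card_eq_fintype_card, ← Fintype.card_subtype]
  exact Fintype.card_congr (Equiv.subtypeEquivRight fun _ => AddMonoidHom.mem_ker.symm)

open Finset in
theorem card_relTrace_eq_norm :
    Nat.card {xy : K × K // xy.2 + xy.2 ^ p ^ e = xy.1 ^ (p ^ e + 1)} = (p ^ e) ^ 3 := by
  classical
  have hnorm (x : K) : (x ^ (p ^ e + 1)) ^ p ^ e = x ^ (p ^ e + 1) := by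
    rw [pow_succ, mul_pow, pow_pow_eq_self_of_card_eq_sq hK, mul_comm]
  calc Nat.card {xy : K × K // xy.2 + xy.2 ^ p ^ e = xy.1 ^ (p ^ e + 1)}
      = ∑ x : K, #{y | relTrace K p e y = x ^ (p ^ e + 1)} := by
        simp_rw [Nat.card_eq_fintype_card, Fintype.card_subtype, card_filter,
          Fintype.sum_prod_type, relTrace_apply]
        congr!
    _ = (p ^ e) ^ 3 := by
        simp [card_relTrace_fiber hK (hnorm _), hK]
        ring

end RelTrace

section ProjectivePlane

variable {K : Type*} [Field K]

def planePoint : Option (K × K) → Fin 3 → K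
  | none => ![0, 1, 0]
  | some (x, y) => ![x, y, 1]

theorem planePoint_ne_zero (o : Option (K × K)) : planePoint o ≠ 0 := by
  rcases o with _ | ⟨x, y⟩
  · exact fun h => one_ne_zero (congrFun h 1)
  · exact fun h => one_ne_zero (congrFun h 2)

theorem span_planePoint_injective :
    Function.Injective fun o : Option (K × K) => K ∙ planePoint o := by
  intro o o' h
  obtain ⟨c, hc⟩ := Submodule.span_singleton_eq_span_singleton.mp h
  have h0 := congrFun hc 0
  have h1 := congrFun hc 1
  have h2 := congrFun hc 2
  rcases o with _ | ⟨x, y⟩ <;> rcases o' with _ | ⟨x', y'⟩ <;>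
    simp_all [planePoint, Units.smul_def]

theorem exists_eq_smul_planePoint {q : ℕ} (hq : q ≠ 0) {u : Fin 3 → K} (hu : u ≠ 0)
    (hiso : herm q u u = 0) : ∃ c : K, c ≠ 0 ∧ ∃ o, u = c • planePoint o := by
  by_cases h2 : u 2 = 0
  · have h0 : u 0 = 0 := by
      simpa [herm, h2, zero_pow hq, hq] using hiso
    have h1 : u 1 ≠ 0 := fun h1 => hu (by ext i; fin_cases i <;> simp [h0, h1, h2])
    refine ⟨u 1, h1, none, ?_⟩
    ext i; fin_cases i <;> simp [planePoint, h0, h2]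
  · refine ⟨u 2, h2, some ((u 2)⁻¹ * u 0, (u 2)⁻¹ * u 1), ?_⟩
    ext i; fin_cases i <;> simp [planePoint, h2]

theorem herm_smul_self (q : ℕ) (c : K) (u : Fin 3 → K) :
    herm q (c • u) (c • u) = c ^ (q + 1) * herm q u u := by
  simp only [herm, Pi.smul_apply, smul_eq_mul]
  ring

theorem herm_planePoint_none_self {q : ℕ} (hq : q ≠ 0) :
    herm q (planePoint none) (planePoint none : Fin 3 → K) = 0 := by
  simp [herm, planePoint, zero_pow hq]

theorem herm_planePoint_some_self_eq_zero_iff (q : ℕ) (x y : K) :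
    herm q (planePoint (some (x, y))) (planePoint (some (x, y))) = 0 ↔
      y + y ^ q = x ^ (q + 1) := by
  have h : herm q (planePoint (some (x, y))) (planePoint (some (x, y))) =
      y + y ^ q - x ^ (q + 1) := by
    simp [herm, planePoint]
    ring
  rw [h, sub_eq_zero]

theorem card_isotropic_lines_eq [Finite K] {q : ℕ} (hq : q ≠ 0) :
    Nat.card {W : Submodule K (Fin 3 → K) //
        ∃ u : Fin 3 → K, u ≠ 0 ∧ herm q u u = 0 ∧ W = K ∙ u}
      = Nat.card {xy : K × K // xy.2 + xy.2 ^ q = xy.1 ^ (q + 1)} + 1 := by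
  set P := {xy : K × K // xy.2 + xy.2 ^ q = xy.1 ^ (q + 1)}
  have hiso (o : Option P) :
      herm q (planePoint (o.map Subtype.val)) (planePoint (o.map Subtype.val)) = 0 := by
    rcases o with _ | ⟨⟨x, y⟩, hxy⟩
    · exact herm_planePoint_none_self hq
    · exact (herm_planePoint_some_self_eq_zero_iff q x y).mpr hxy
  let Φ : Option P → {W : Submodule K (Fin 3 → K) //
      ∃ u : Fin 3 → K, u ≠ 0 ∧ herm q u u = 0 ∧ W = K ∙ u} := fun o =>
    ⟨_, _, planePoint_ne_zero _, hiso o, rfl⟩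
  have hinj : Function.Injective Φ := fun o o' h =>
    Option.map_injective Subtype.val_injective (span_planePoint_injective (congrArg Subtype.val h))
  have hsurj : Function.Surjective Φ := by
    rintro ⟨_, u, hu, huu, rfl⟩
    obtain ⟨c, hc, o, rfl⟩ := exists_eq_smul_planePoint hq hu huu
    have ho : herm q (planePoint o) (planePoint o) = 0 := by
      simpa [herm_smul_self, hc] using huu
    have hlift : ∃ o' : Option P, o'.map Subtype.val = o := by
      rcases o with _ | ⟨x, y⟩
      · exact ⟨none, rfl⟩
      · exact ⟨some ⟨(x, y), (herm_planePoint_some_self_eq_zero_iff q x y).mp ho⟩, rfl⟩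
    obtain ⟨o', rfl⟩ := hlift
    exact ⟨o', Subtype.ext (Submodule.span_singleton_smul_eq hc.isUnit _).symm⟩
  rw [← Finite.card_option, Nat.card_congr (Equiv.ofBijective Φ ⟨hinj, hsurj⟩)]

end ProjectivePlane

theorem card_absolute_points_general
    (p e q : ℕ) (hp : p.Prime) (hq : q = p ^ e)
    (K : Type) [Field K] [Fintype K]
    (hcard : Fintype.card K = q ^ 2) :
    Nat.card {W : Submodule K (Fin 3 → K) //
        ∃ u : Fin 3 → K, u ≠ 0 ∧ herm q u u = 0 ∧ W = Submodule.span K {u}}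
      = q ^ 3 + 1 := by
  subst hq
  have : Fact p.Prime := ⟨hp⟩
  have : CharP K p := charP_of_card_eq_prime_pow (f := e * 2) (by rw [hcard, pow_mul])
  rw [card_isotropic_lines_eq (one_lt_of_card_eq_sq hcard).ne_bot, card_relTrace_eq_norm hcard]

/-- The set of absolute points (1-dimensional subspaces of `F_{q²}³` spanned by
nonzero isotropic vectors) has exactly `q³ + 1` elements. -/
theorem card_absolute_points
    (p e q : ℕ) (hp : p.Prime) (he : 0 < e) (hq : q = p ^ e)
    (K : Type) [Field K] [Fintype K]
    (hcard : Fintype.card K = q ^ 2) :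
    Nat.card {W : Submodule K (Fin 3 → K) //
        ∃ u : Fin 3 → K, u ≠ 0 ∧ herm q u u = 0 ∧ W = Submodule.span K {u}}
      = q ^ 3 + 1 :=
  card_absolute_points_general p e q hp hq K hcard
end

section
/- The stabilizer in PGU(3,q) of the two absolute points ∞ = ⟨0,1,0⟩ and 0 = ⟨0,0,1⟩ consists exactly of the projective transformations induced by the linear maps x' = x, y' = a^q y, z' = z/a for a ∈ F_{q^2}^*. -/
open Matrix

/-- The Gram matrix of the Hermitian form. -/
def DMat (K : Type*) [Field K] : Matrix (Fin 3) (Fin 3) K :=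
  !![-1, 0, 0; 0, 0, 1; 0, 1, 0]

/-- Membership in `GU(3,q)`: an invertible matrix preserving the Hermitian form
with Gram matrix `D`, i.e. `Aᵀ D Ā = D` where `Ā` is the entrywise `q`-th power. -/
def InGU {K : Type*} [Field K] (q : ℕ) (A : Matrix (Fin 3) (Fin 3) K) : Prop :=
  IsUnit A.det ∧ Aᵀ * DMat K * A.map (fun x => x ^ q) = DMat K

/-- The stabilizer in `PGU(3,q)` of the two absolute points `∞ = ⟨0,1,0⟩` and
`0 = ⟨0,0,1⟩` consists exactly of the projective transformations induced by
`x' = x, y' = a^q y, z' = z/a` with `a ≠ 0`. -/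
theorem stabilizer_two_points
    (p e q : ℕ) (hp : p.Prime) (he : 0 < e) (hq : q = p ^ e)
    (K : Type) [Field K] [Fintype K]
    (hcard : Fintype.card K = q ^ 2)
    (A : Matrix (Fin 3) (Fin 3) K) (hA : InGU q A) :
    ((∃ c : K, A.mulVec ![0, 1, 0] = c • ![0, 1, 0]) ∧
     (∃ c : K, A.mulVec ![0, 0, 1] = c • ![0, 0, 1]))
    ↔ ∃ a z : K, a ≠ 0 ∧ z ^ (q + 1) = 1 ∧
        A = z • Matrix.diagonal ![1, a ^ q, a⁻¹] := by
  obtain ⟨hdet, hgram⟩ := hA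
  have hq0 : q ≠ 0 := by rw [hq]; exact pow_ne_zero _ hp.pos.ne'
  constructor
  · rintro ⟨⟨c, hc⟩, ⟨c', hc'⟩⟩
    -- column conditions
    have e01 : A 0 1 = 0 := by
      have := congrFun hc 0
      simpa [Matrix.mulVec, dotProduct, Fin.sum_univ_three] using this
    have e21 : A 2 1 = 0 := by
      have := congrFun hc 2
      simpa [Matrix.mulVec, dotProduct, Fin.sum_univ_three] using this
    have e02 : A 0 2 = 0 := by
      have := congrFun hc' 0
      simpa [Matrix.mulVec, dotProduct, Fin.sum_univ_three] using this
    have e12 : A 1 2 = 0 := by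
      have := congrFun hc' 1
      simpa [Matrix.mulVec, dotProduct, Fin.sum_univ_three] using this
    -- Gram entries
    have g12 : A 1 1 * A 2 2 ^ q = 1 := by
      have h := congrFun (congrFun hgram 1) 2
      simp [Matrix.mul_apply, Matrix.transpose_apply, Matrix.map_apply, DMat,
        Fin.sum_univ_three] at h
      linear_combination h + A 0 2 ^ q * e01 - A 1 2 ^ q * e21
    have g21 : A 2 2 * A 1 1 ^ q = 1 := by
      have h := congrFun (congrFun hgram 2) 1
      simp [Matrix.mul_apply, Matrix.transpose_apply, Matrix.map_apply, DMat,
        Fin.sum_univ_three] at h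
      linear_combination h + A 0 1 ^ q * e02 - A 2 1 ^ q * e12
    have g10 : A 1 1 * A 2 0 ^ q = 0 := by
      have h := congrFun (congrFun hgram 1) 0
      simp [Matrix.mul_apply, Matrix.transpose_apply, Matrix.map_apply, DMat,
        Fin.sum_univ_three] at h
      linear_combination h + A 0 0 ^ q * e01 - A 1 0 ^ q * e21
    have g20 : A 2 2 * A 1 0 ^ q = 0 := by
      have h := congrFun (congrFun hgram 2) 0
      simp [Matrix.mul_apply, Matrix.transpose_apply, Matrix.map_apply, DMat,
        Fin.sum_univ_three, Matrix.vecHead, Matrix.vecTail] at h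
      linear_combination h + A 0 0 ^ q * e02 - A 2 0 ^ q * e12
    have hb : A 1 1 ≠ 0 := by
      intro h; rw [h] at g12; simp at g12
    have hd : A 2 2 ≠ 0 := by
      intro h; rw [h] at g21; simp at g21
    have e20 : A 2 0 = 0 := by
      rcases mul_eq_zero.1 g10 with h | h
      · exact absurd h hb
      · exact (pow_eq_zero_iff hq0).1 h
    have e10 : A 1 0 = 0 := by
      rcases mul_eq_zero.1 g20 with h | h
      · exact absurd h hd
      · exact (pow_eq_zero_iff hq0).1 h
    have hx : A 0 0 ^ (q + 1) = 1 := by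
      have h := congrFun (congrFun hgram 0) 0
      simp [Matrix.mul_apply, Matrix.transpose_apply, Matrix.map_apply, DMat,
        Fin.sum_univ_three] at h
      have hx' : A 0 0 * A 0 0 ^ q = 1 := by
        linear_combination -h + A 2 0 ^ q * e10 + A 1 0 ^ q * e20
      calc A 0 0 ^ (q + 1) = A 0 0 * A 0 0 ^ q := by ring
        _ = 1 := hx'
    have hx0 : A 0 0 ≠ 0 := by
      intro h; rw [h] at hx; simp at hx
    refine ⟨A 0 0 * (A 2 2)⁻¹, A 0 0, mul_ne_zero hx0 (inv_ne_zero hd), hx, ?_⟩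
    ext i j
    fin_cases i <;> fin_cases j <;>
      simp [Matrix.diagonal, e01, e02, e10, e12, e20, e21, mul_pow]
    · -- A 1 1 entry
      have hdq : A 2 2 ^ q ≠ 0 := pow_ne_zero _ hd
      field_simp
      calc A 1 1 * A 2 2 ^ q = 1 := g12
        _ = A 0 0 ^ (q + 1) := hx.symm
        _ = A 0 0 * A 0 0 ^ q := by ring
    · -- A 2 2 entry
      field_simp
  · rintro ⟨a, z, ha, hz, rfl⟩
    constructor
    · refine ⟨z * a ^ q, ?_⟩
      funext i
      fin_cases i <;>
        simp [Matrix.mulVec, dotProduct, Fin.sum_univ_three, Matrix.diagonal]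
    · refine ⟨z * a⁻¹, ?_⟩
      funext i
      fin_cases i <;>
        simp [Matrix.mulVec, dotProduct, Fin.sum_univ_three, Matrix.diagonal]
end

section
/- The stabilizer in PGU(3,q) of the flag (∞, L), where L is the line x = 0 of the Hermitian unital, acts transitively on the q points of L other than ∞; moreover this stabilizer consists exactly of the maps x' = x, y' = (a^{q+1} y + cz)/a, z' = z/a with a ∈ F_{q^2}^*, c ∈ F_{q^2}, c^q + c = 0. -/
open Matrix

/-!
A matrix of `GU(3,q)` fixing `∞` and mapping `L` into itself has zero entries at `(0,1)`, `(0,2)`,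
`(2,1)`. Reading `Aᵀ D A^(q) = D` entrywise as `β(Aᵢ, Aⱼ) = D i j` for the columns `Aᵢ` of `A` then
kills the entries `(1,0)`, `(2,0)` and ties the remaining ones together, which is the stated normal
form.

The points of `L` other than `∞` are the `⟨0, c, 1⟩` with `c ^ q + c = 0`. The translations
`y ↦ y + c z` with `c ^ q + c = 0` are unitary, stabilize the flag and move `⟨0, d, 1⟩` to
`⟨0, d + c, 1⟩`; since `c ↦ c ^ q + c` is additive, they act transitively. There are exactly `q`
such `c`: they are the roots of `X ^ q + X`, which is separable (its derivative is `1`) and divides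
`X ^ q² - X = (X ^ q + X) ^ q - (X ^ q + X)`, a product of distinct linear factors over `K`.
-/

section TraceZero

open Polynomial

variable {K : Type*} [Field K] {p e q : ℕ} [Fact p.Prime] [CharP K p]

theorem pow_add_self_sub_eq_zero (hq : q = p ^ e) {c d : K} (hc : c ^ q + c = 0)
    (hd : d ^ q + d = 0) : (c - d) ^ q + (c - d) = 0 := by
  rw [hq, sub_pow_char_pow, ← hq]
  linear_combination hc - hd

theorem card_pow_add_self_eq_zero [Fintype K] (he : e ≠ 0) (hq : q = p ^ e)
    (hcard : Fintype.card K = q ^ 2) : Nat.card {c : K // c ^ q + c = 0} = q := by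
  classical
  have hq1 : 1 < q := hq ▸ Nat.one_lt_pow he (Fact.out : p.Prime).one_lt
  have hqK : (q : K) = 0 := by rw [hq, Nat.cast_pow, CharP.cast_eq_zero, zero_pow he]
  set f : K[X] := X ^ q + X
  have hf_deg : f.natDegree = q := by
    rw [natDegree_add_eq_left_of_natDegree_lt] <;> simp [hq1]
  have hf_ne : f ≠ 0 := ne_zero_of_natDegree_gt (hf_deg ▸ hq1)
  have hf_dvd : f ∣ X ^ Fintype.card K - X := by
    refine ⟨f ^ (q - 1) - 1, ?_⟩
    have hfq : f ^ q = X ^ (q * q) + X ^ q := calc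
      f ^ q = f ^ p ^ e := by rw [hq]
      _ = (X ^ q) ^ p ^ e + X ^ p ^ e := add_pow_char_pow ..
      _ = X ^ (q * q) + X ^ q := by rw [← hq, ← pow_mul]
    rw [mul_sub, mul_one, ← pow_succ', Nat.sub_add_cancel hq1.le, hfq, hcard, sq]
    ring
  have hsplit : (X ^ Fintype.card K - X : K[X]).Splits := by
    rw [splits_iff_card_roots, FiniteField.roots_X_pow_card_sub_X,
      FiniteField.X_pow_card_sub_X_natDegree_eq K Fintype.one_lt_card]
    rfl
  have hsep : f.Separable := by
    rw [separable_def, show derivative f = 1 by simp [f, derivative_X_pow, hqK]]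
    exact isCoprime_one_right
  have hf_split : f.Splits :=
    hsplit.of_dvd (FiniteField.X_pow_card_sub_X_ne_zero K Fintype.one_lt_card) hf_dvd
  have hroots := card_rootSet_eq_natDegree (K := K) hsep (by simpa using hf_split)
  calc Nat.card {c : K // c ^ q + c = 0}
      = Nat.card (f.rootSet K) :=
        Nat.card_congr (Equiv.subtypeEquivRight fun c => by simp [mem_rootSet, hf_ne, f])
    _ = q := by rw [Nat.card_eq_fintype_card, hroots, hf_deg]

end TraceZero

section Unitary

variable {K : Type*} [Field K] {q : ℕ}

theorem herm_smul (s t : K) (u v : Fin 3 → K) :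
    herm q (s • u) (t • v) = s * t ^ q * herm q u v := by
  simp only [herm, Pi.smul_apply, smul_eq_mul, mul_pow]
  ring

theorem transpose_mul_DMat_mul_map_pow_apply (A : Matrix (Fin 3) (Fin 3) K) (i j : Fin 3) :
    (Aᵀ * DMat K * A.map (· ^ q)) i j = herm q (Aᵀ i) (Aᵀ j) := by
  simp only [DMat, Matrix.mul_apply, transpose_apply, of_apply, cons_val', cons_val_fin_one,
    Fin.sum_univ_three, cons_val_zero, cons_val_one, cons_val, map_apply, mul_neg, mul_one,
    mul_zero, add_zero, neg_mul, zero_add, herm]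
  ring

theorem inGU_iff {A : Matrix (Fin 3) (Fin 3) K} :
    InGU q A ↔ IsUnit A.det ∧ ∀ i j, herm q (Aᵀ i) (Aᵀ j) = DMat K i j := by
  simp only [InGU, ← Matrix.ext_iff, transpose_mul_DMat_mul_map_pow_apply]

def StabilizesFlag (A : Matrix (Fin 3) (Fin 3) K) : Prop :=
  (∃ c : K, A *ᵥ ![0, 1, 0] = c • ![0, 1, 0]) ∧ ∀ v : Fin 3 → K, v 0 = 0 → (A *ᵥ v) 0 = 0

theorem stabilizesFlag_iff {A : Matrix (Fin 3) (Fin 3) K} :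
    StabilizesFlag A ↔ A 0 1 = 0 ∧ A 0 2 = 0 ∧ A 2 1 = 0 := by
  constructor
  · rintro ⟨⟨t, ht⟩, hL⟩
    refine ⟨?_, ?_, ?_⟩
    · simpa [mulVec, dotProduct, Fin.sum_univ_three] using hL ![0, 1, 0] rfl
    · simpa [mulVec, dotProduct, Fin.sum_univ_three] using hL ![0, 0, 1] rfl
    · simpa [mulVec, dotProduct, Fin.sum_univ_three] using congr_fun ht 2
  · rintro ⟨h01, h02, h21⟩
    refine ⟨⟨A 1 1, ?_⟩, fun v hv => ?_⟩
    · ext i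
      fin_cases i <;> simp [mulVec, dotProduct, Fin.sum_univ_three, h01, h21]
    · simp [mulVec, dotProduct, Fin.sum_univ_three, h01, h02, hv]

theorem InGU.exists_eq_smul_of_stabilizesFlag (hq : q ≠ 0) {A : Matrix (Fin 3) (Fin 3) K}
    (hA : InGU q A) (hS : StabilizesFlag A) :
    ∃ a c z : K, a ≠ 0 ∧ c ^ q + c = 0 ∧ z ^ (q + 1) = 1 ∧
      A = z • !![1, 0, 0; 0, a ^ q, c / a; 0, 0, a⁻¹] := by
  obtain ⟨h01, h02, h21⟩ := stabilizesFlag_iff.mp hS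
  have E := (inGU_iff.mp hA).2
  have E12 : A 1 1 * A 2 2 ^ q = 1 := by simpa [herm, DMat, h01, h02, h21, hq] using E 1 2
  have hA11 : A 1 1 ≠ 0 := left_ne_zero_of_mul_eq_one E12
  have hA22 : A 2 2 ≠ 0 := fun h => by simp [h, hq] at E12
  have h20 : A 2 0 = 0 := by simpa [herm, DMat, h01, h21, hq, hA11] using E 0 1
  have h10 : A 1 0 = 0 := by simpa [herm, DMat, h02, h20, hq, hA22] using E 0 2
  have E00 : A 0 0 * A 0 0 ^ q = 1 := by simpa [herm, DMat, h10, h20, hq] using E 0 0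
  have E22 : A 1 2 * A 2 2 ^ q + A 2 2 * A 1 2 ^ q = 0 := by
    simpa [herm, DMat, h02, hq] using E 2 2
  have hA00 : A 0 0 ≠ 0 := left_ne_zero_of_mul_eq_one E00
  refine ⟨A 0 0 / A 2 2, A 1 2 / A 2 2, A 0 0, div_ne_zero hA00 hA22, ?_, ?_, ?_⟩
  · rw [div_pow, div_add_div _ _ (pow_ne_zero _ hA22) hA22, div_eq_zero_iff]
    left
    linear_combination E22
  · linear_combination E00
  · ext i j
    fin_cases i <;> fin_cases j <;> simp [h01, h02, h21, h20, h10, div_pow] <;> field_simp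
    linear_combination E12 - E00

theorem stabilizesFlag_smul (a c z : K) :
    StabilizesFlag (z • !![1, 0, 0; 0, a ^ q, c / a; 0, 0, a⁻¹]) :=
  stabilizesFlag_iff.mpr (by simp)

theorem InGU.stabilizesFlag_iff (hq : q ≠ 0) {A : Matrix (Fin 3) (Fin 3) K} (hA : InGU q A) :
    StabilizesFlag A ↔ ∃ a c z : K, a ≠ 0 ∧ c ^ q + c = 0 ∧ z ^ (q + 1) = 1 ∧
      A = z • !![1, 0, 0; 0, a ^ q, c / a; 0, 0, a⁻¹] :=
  ⟨hA.exists_eq_smul_of_stabilizesFlag hq,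
    fun ⟨a, c, z, _, _, _, hA⟩ => hA ▸ stabilizesFlag_smul a c z⟩

end Unitary

section LinePoints

variable {K : Type*} [Field K] {q : ℕ}

def linePoint (c : K) : Fin 3 → K := ![0, c, 1]

theorem herm_linePoint (c : K) : herm q (linePoint c) (linePoint c) = c ^ q + c := by
  simp [herm, linePoint, add_comm]

theorem span_linePoint_eq_span_iff {c : K} {v : Fin 3 → K} :
    Submodule.span K {linePoint c} = Submodule.span K {v} ↔
      ∃ t : K, t ≠ 0 ∧ t • linePoint c = v := by
  rw [Submodule.span_singleton_eq_span_singleton]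
  exact ⟨fun ⟨t, ht⟩ => ⟨t, t.ne_zero, ht⟩, fun ⟨t, ht, htv⟩ => ⟨Units.mk0 t ht, htv⟩⟩

theorem span_linePoint_ne_span_infty (c : K) :
    Submodule.span K {linePoint c} ≠ Submodule.span K {![0, 1, 0]} := by
  rw [Ne, span_linePoint_eq_span_iff]
  rintro ⟨t, ht, h⟩
  simpa [linePoint, ht] using congr_fun h 2

theorem span_linePoint_injective :
    Function.Injective fun c : K => Submodule.span K {linePoint c} := by
  intro c d h
  obtain ⟨t, -, h⟩ := span_linePoint_eq_span_iff.mp h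
  have ht : t = 1 := by simpa [linePoint] using congr_fun h 2
  simpa [linePoint, ht] using congr_fun h 1

theorem apply_two_ne_zero {w : Fin 3 → K} (hw : w ≠ 0) (hw0 : w 0 = 0)
    (hne : Submodule.span K {w} ≠ Submodule.span K {![0, 1, 0]}) : w 2 ≠ 0 := by
  intro hw2
  have hw1 : w 1 ≠ 0 := fun hw1 => hw (by ext i; fin_cases i <;> assumption)
  have : w = w 1 • ![0, 1, 0] := by ext i; fin_cases i <;> simp [hw0, hw2]
  exact hne (by rw [this, Submodule.span_singleton_smul_eq (IsUnit.mk0 _ hw1)])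

theorem exists_eq_smul_linePoint {w : Fin 3 → K} (hw : w ≠ 0) (hw0 : w 0 = 0)
    (hww : herm q w w = 0) (hne : Submodule.span K {w} ≠ Submodule.span K {![0, 1, 0]}) :
    ∃ t c : K, t ≠ 0 ∧ c ^ q + c = 0 ∧ w = t • linePoint c := by
  have hw2 := apply_two_ne_zero hw hw0 hne
  have hw_eq : w = w 2 • linePoint (w 1 / w 2) := by
    ext i; fin_cases i <;> simp [linePoint, hw0, mul_div_cancel₀ _ hw2]
  refine ⟨w 2, w 1 / w 2, hw2, ?_, hw_eq⟩
  rw [hw_eq, herm_smul, herm_linePoint] at hww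
  exact (mul_eq_zero.mp hww).resolve_left (mul_ne_zero hw2 (pow_ne_zero _ hw2))

theorem linePoint_ne_zero (c : K) : linePoint c ≠ 0 :=
  fun h => by simpa [linePoint] using congr_fun h 2

variable (K q) in
def LinePointsNeInfty : Type _ :=
  {W : Submodule K (Fin 3 → K) //
    (∃ w : Fin 3 → K, w ≠ 0 ∧ w 0 = 0 ∧ herm q w w = 0 ∧ W = Submodule.span K {w})
    ∧ W ≠ Submodule.span K {(![0, 1, 0] : Fin 3 → K)}}

theorem card_linePointsNeInfty :
    Nat.card (LinePointsNeInfty K q) = Nat.card {c : K // c ^ q + c = 0} := by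
  let g : {c : K // c ^ q + c = 0} → LinePointsNeInfty K q := fun c =>
    ⟨Submodule.span K {linePoint c.1},
      ⟨linePoint c.1, linePoint_ne_zero _, rfl, by rw [herm_linePoint, c.2], rfl⟩,
      span_linePoint_ne_span_infty _⟩
  refine (Nat.card_congr (Equiv.ofBijective g ⟨fun c d h => ?_, ?_⟩)).symm
  · exact Subtype.ext (span_linePoint_injective (congr_arg Subtype.val h))
  · rintro ⟨W, ⟨w, hw, hw0, hww, rfl⟩, hne⟩
    obtain ⟨t, c, ht, hc, rfl⟩ := exists_eq_smul_linePoint hw hw0 hww hne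
    exact ⟨⟨c, hc⟩, Subtype.ext (Submodule.span_singleton_smul_eq (IsUnit.mk0 t ht) _).symm⟩

def translation (c : K) : Matrix (Fin 3) (Fin 3) K :=
  !![1, 0, 0; 0, 1, c; 0, 0, 1]

theorem inGU_translation (hq : q ≠ 0) {c : K} (hc : c ^ q + c = 0) :
    InGU q (translation c) := by
  refine inGU_iff.mpr ⟨by simp [translation, det_fin_three], fun i j => ?_⟩
  fin_cases i <;> fin_cases j <;> simp [herm, DMat, translation, hq]
  linear_combination hc

theorem stabilizesFlag_translation (c : K) : StabilizesFlag (translation c) :=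
  stabilizesFlag_iff.mpr (by simp [translation])

theorem translation_mulVec_linePoint (c d : K) :
    translation c *ᵥ linePoint d = linePoint (d + c) := by
  ext i; fin_cases i <;> simp [translation, linePoint, mulVec, dotProduct, Fin.sum_univ_three]

theorem exists_inGU_stabilizesFlag_mulVec_eq_smul {p e : ℕ} [Fact p.Prime] [CharP K p]
    (hq : q = p ^ e) {u w : Fin 3 → K} (hu : u ≠ 0) (hw : w ≠ 0) (hu0 : u 0 = 0) (hw0 : w 0 = 0)
    (huu : herm q u u = 0) (hww : herm q w w = 0)
    (hune : Submodule.span K {u} ≠ Submodule.span K {![0, 1, 0]})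
    (hwne : Submodule.span K {w} ≠ Submodule.span K {![0, 1, 0]}) :
    ∃ A : Matrix (Fin 3) (Fin 3) K, InGU q A ∧ StabilizesFlag A ∧ ∃ c : K, A *ᵥ u = c • w := by
  obtain ⟨s, c, -, hc, rfl⟩ := exists_eq_smul_linePoint hu hu0 huu hune
  obtain ⟨t, d, ht, hd, rfl⟩ := exists_eq_smul_linePoint hw hw0 hww hwne
  have hq0 : q ≠ 0 := hq ▸ pow_ne_zero e (Fact.out : p.Prime).ne_zero
  refine ⟨translation (d - c), inGU_translation hq0 (pow_add_self_sub_eq_zero hq hd hc),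
    stabilizesFlag_translation _, s / t, ?_⟩
  rw [mulVec_smul, translation_mulVec_linePoint, smul_smul, div_mul_cancel₀ _ ht, add_sub_cancel]

end LinePoints

theorem flag_stabilizer_transitive_on_line_general
    (p e q : ℕ) (hp : p.Prime) (he : 0 < e) (hq : q = p ^ e)
    (K : Type) [Field K] [Fintype K]
    (hcard : Fintype.card K = q ^ 2) :
    -- the stabilizer of the flag (∞, L) is as described
    (∀ A : Matrix (Fin 3) (Fin 3) K, InGU q A →
      (((∃ c : K, A.mulVec ![0, 1, 0] = c • ![0, 1, 0]) ∧
        (∀ v : Fin 3 → K, v 0 = 0 → A.mulVec v 0 = 0))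
       ↔ ∃ a c z : K, a ≠ 0 ∧ c ^ q + c = 0 ∧ z ^ (q + 1) = 1 ∧
           A = z • !![1, 0, 0; 0, a ^ q, c / a; 0, 0, a⁻¹]))
    -- L has exactly q points other than ∞
    ∧ Nat.card {W : Submodule K (Fin 3 → K) //
        (∃ w : Fin 3 → K, w ≠ 0 ∧ w 0 = 0 ∧ herm q w w = 0 ∧ W = Submodule.span K {w})
        ∧ W ≠ Submodule.span K {(![0, 1, 0] : Fin 3 → K)}} = q
    -- transitivity on the points of L other than ∞
    ∧ (∀ u w : Fin 3 → K, u ≠ 0 → w ≠ 0 → u 0 = 0 → w 0 = 0 →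
        herm q u u = 0 → herm q w w = 0 →
        Submodule.span K {u} ≠ Submodule.span K {(![0, 1, 0] : Fin 3 → K)} →
        Submodule.span K {w} ≠ Submodule.span K {(![0, 1, 0] : Fin 3 → K)} →
        ∃ A : Matrix (Fin 3) (Fin 3) K, InGU q A ∧
          (∃ c : K, A.mulVec ![0, 1, 0] = c • ![0, 1, 0]) ∧
          (∀ v : Fin 3 → K, v 0 = 0 → A.mulVec v 0 = 0) ∧
          ∃ c : K, A.mulVec u = c • w) := by
  have : Fact p.Prime := ⟨hp⟩
  have : CharP K p := charP_of_card_eq_prime_pow (f := e * 2) (by rw [hcard, hq, ← pow_mul])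
  have hq0 : q ≠ 0 := hq ▸ pow_ne_zero e hp.ne_zero
  refine ⟨fun A hA => hA.stabilizesFlag_iff hq0, ?_, fun u w hu hw hu0 hw0 huu hww hune hwne => ?_⟩
  · exact card_linePointsNeInfty.trans (card_pow_add_self_eq_zero he.ne' hq hcard)
  · obtain ⟨A, hA, ⟨hinfty, hL⟩, hAu⟩ :=
      exists_inGU_stabilizesFlag_mulVec_eq_smul hq hu hw hu0 hw0 huu hww hune hwne
    exact ⟨A, hA, hinfty, hL, hAu⟩

/-- The stabilizer in `PGU(3,q)` of the flag `(∞, L)`, where `L : x = 0`, consists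
exactly of the maps `x' = x, y' = (a^{q+1} y + cz)/a, z' = z/a` with `c^q + c = 0`,
and it acts transitively on the `q` points of `L` other than `∞`. -/
theorem flag_stabilizer_transitive_on_line
    (p e q : ℕ) (hp : p.Prime) (he : 0 < e) (hq : q = p ^ e) (hq2 : 2 < q)
    (K : Type) [Field K] [Fintype K]
    (hcard : Fintype.card K = q ^ 2) :
    -- the stabilizer of the flag (∞, L) is as described
    (∀ A : Matrix (Fin 3) (Fin 3) K, InGU q A →
      (((∃ c : K, A.mulVec ![0, 1, 0] = c • ![0, 1, 0]) ∧
        (∀ v : Fin 3 → K, v 0 = 0 → A.mulVec v 0 = 0))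
       ↔ ∃ a c z : K, a ≠ 0 ∧ c ^ q + c = 0 ∧ z ^ (q + 1) = 1 ∧
           A = z • !![1, 0, 0; 0, a ^ q, c / a; 0, 0, a⁻¹]))
    -- L has exactly q points other than ∞
    ∧ Nat.card {W : Submodule K (Fin 3 → K) //
        (∃ w : Fin 3 → K, w ≠ 0 ∧ w 0 = 0 ∧ herm q w w = 0 ∧ W = Submodule.span K {w})
        ∧ W ≠ Submodule.span K {(![0, 1, 0] : Fin 3 → K)}} = q
    -- transitivity on the points of L other than ∞
    ∧ (∀ u w : Fin 3 → K, u ≠ 0 → w ≠ 0 → u 0 = 0 → w 0 = 0 →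
        herm q u u = 0 → herm q w w = 0 →
        Submodule.span K {u} ≠ Submodule.span K {(![0, 1, 0] : Fin 3 → K)} →
        Submodule.span K {w} ≠ Submodule.span K {(![0, 1, 0] : Fin 3 → K)} →
        ∃ A : Matrix (Fin 3) (Fin 3) K, InGU q A ∧
          (∃ c : K, A.mulVec ![0, 1, 0] = c • ![0, 1, 0]) ∧
          (∀ v : Fin 3 → K, v 0 = 0 → A.mulVec v 0 = 0) ∧
          ∃ c : K, A.mulVec u = c • w) :=
  flag_stabilizer_transitive_on_line_general p e q hp he hq K hcard
end
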